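/- Let (X1, X2) be binary with DSBS(p1) distribution, (X1, Y) be DSBS(p2), and suppose Y − X1 − X2 is a Markov chain. If random variables X̂1, X̂2, Ŝ satisfy P(X1 ≠ X̂1) ≤ D1 and P(X2 ≠ X̂2) ≤ D2 with D1, D2 ∈ [0, 1/2], then I(X1, X2; X̂1, X̂2, Ŝ | Y) ≥ h_b(p1) + h_b(p2) − h_b(D1) − h_b(D2). -/

import Mathlib

open scoped BigOperators

/-- Binary entropy function (base-2 logs). -/
noncomputable def hb (q : ℝ) : ℝ := -(q * Real.logb 2 q) - (1 - q) * Real.logb 2 (1 - q)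

section Aux

lemma logtwo_pos : (0:ℝ) < Real.log 2 := Real.log_pos (by norm_num)

lemma mul_logb_mul (x y : ℝ) :
    (x * y) * Real.logb 2 (x * y) = y * (x * Real.logb 2 x) + x * (y * Real.logb 2 y) := by
  have h := Real.negMulLog_mul x y
  simp only [Real.negMulLog] at h
  simp only [Real.logb]
  field_simp
  nlinarith [h]

lemma key_gibbs (q r c m : ℝ) (hq : 0 ≤ q) (hr : q ≤ r) (hc : q ≤ c)
    (hrm : r ≤ m) :
    q * Real.log (r / m) + q * Real.log (c / m) - q * Real.log (q / m) ≤ r * c / m - q := by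
  rcases eq_or_lt_of_le hq with h0 | h0
  · rw [← h0]
    simp only [zero_mul, add_zero, sub_zero, zero_add]
    have : 0 ≤ r * c / m := div_nonneg (mul_nonneg (by linarith) (by linarith)) (by linarith)
    linarith
  · have hr0 : 0 < r := lt_of_lt_of_le h0 hr
    have hc0 : 0 < c := lt_of_lt_of_le h0 hc
    have hm0 : 0 < m := lt_of_lt_of_le hr0 hrm
    have hlog : Real.log (r / m) + Real.log (c / m) - Real.log (q / m)
        = Real.log (r * c / (q * m)) := by
      rw [Real.log_div hr0.ne' hm0.ne', Real.log_div hc0.ne' hm0.ne',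
        Real.log_div h0.ne' hm0.ne',
        Real.log_div (by positivity) (by positivity : (q*m : ℝ) ≠ 0),
        Real.log_mul hr0.ne' hc0.ne', Real.log_mul h0.ne' hm0.ne']
      ring
    have hle := Real.log_le_sub_one_of_pos (show 0 < r*c/(q*m) by positivity)
    have heq : q * (r * c / (q * m)) = r * c / m := by field_simp
    calc q * Real.log (r/m) + q * Real.log (c/m) - q * Real.log (q/m)
        = q * Real.log (r*c/(q*m)) := by linear_combination q * hlog
      _ ≤ q * (r*c/(q*m) - 1) := mul_le_mul_of_nonneg_left hle h0.le
      _ = r*c/m - q := by rw [mul_sub, heq]; ring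

lemma gibbs2x2_nat (q00 q01 q10 q11 : ℝ)
    (h00 : 0 ≤ q00) (h01 : 0 ≤ q01) (h10 : 0 ≤ q10) (h11 : 0 ≤ q11) :
    -(q00 * Real.log (q00 / (q00+q01+q10+q11))) - q01 * Real.log (q01 / (q00+q01+q10+q11))
      - q10 * Real.log (q10 / (q00+q01+q10+q11)) - q11 * Real.log (q11 / (q00+q01+q10+q11))
    ≤ (-((q00+q01) * Real.log ((q00+q01)/(q00+q01+q10+q11)))
        - (q10+q11) * Real.log ((q10+q11)/(q00+q01+q10+q11)))
      + (-((q00+q10) * Real.log ((q00+q10)/(q00+q01+q10+q11)))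
        - (q01+q11) * Real.log ((q01+q11)/(q00+q01+q10+q11))) := by
  set m := q00+q01+q10+q11 with hm
  rcases eq_or_lt_of_le (show (0:ℝ) ≤ m by positivity) with hm0 | hm0
  · have e00 : q00 = 0 := by linarith
    have e01 : q01 = 0 := by linarith
    have e10 : q10 = 0 := by linarith
    have e11 : q11 = 0 := by linarith
    simp [e00, e01, e10, e11]
  · have k1 := key_gibbs q00 (q00+q01) (q00+q10) m h00 (by linarith) (by linarith) (by linarith)
    have k2 := key_gibbs q01 (q00+q01) (q01+q11) m h01 (by linarith) (by linarith) (by linarith)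
    have k3 := key_gibbs q10 (q10+q11) (q00+q10) m h10 (by linarith) (by linarith) (by linarith)
    have k4 := key_gibbs q11 (q10+q11) (q01+q11) m h11 (by linarith) (by linarith) (by linarith)
    have hid : (q00+q01)*(q00+q10)/m + (q00+q01)*(q01+q11)/m
        + (q10+q11)*(q00+q10)/m + (q10+q11)*(q01+q11)/m = m := by
      field_simp
      ring
    nlinarith [k1, k2, k3, k4, hid]

lemma gibbs2x2 (q00 q01 q10 q11 : ℝ)
    (h00 : 0 ≤ q00) (h01 : 0 ≤ q01) (h10 : 0 ≤ q10) (h11 : 0 ≤ q11) :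
    -(q00 * Real.logb 2 (q00 / (q00+q01+q10+q11)))
      - q01 * Real.logb 2 (q01 / (q00+q01+q10+q11))
      - q10 * Real.logb 2 (q10 / (q00+q01+q10+q11))
      - q11 * Real.logb 2 (q11 / (q00+q01+q10+q11))
    ≤ (-((q00+q01) * Real.logb 2 ((q00+q01)/(q00+q01+q10+q11)))
        - (q10+q11) * Real.logb 2 ((q10+q11)/(q00+q01+q10+q11)))
      + (-((q00+q10) * Real.logb 2 ((q00+q10)/(q00+q01+q10+q11)))
        - (q01+q11) * Real.logb 2 ((q01+q11)/(q00+q01+q10+q11))) := by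
  have hnat := gibbs2x2_nat q00 q01 q10 q11 h00 h01 h10 h11
  have h2 := logtwo_pos
  calc -(q00 * Real.logb 2 (q00 / (q00+q01+q10+q11)))
      - q01 * Real.logb 2 (q01 / (q00+q01+q10+q11))
      - q10 * Real.logb 2 (q10 / (q00+q01+q10+q11))
      - q11 * Real.logb 2 (q11 / (q00+q01+q10+q11))
      = (-(q00 * Real.log (q00 / (q00+q01+q10+q11)))
          - q01 * Real.log (q01 / (q00+q01+q10+q11))
          - q10 * Real.log (q10 / (q00+q01+q10+q11))
          - q11 * Real.log (q11 / (q00+q01+q10+q11))) / Real.log 2 := by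
        simp only [Real.logb]; ring
    _ ≤ ((-((q00+q01) * Real.log ((q00+q01)/(q00+q01+q10+q11)))
          - (q10+q11) * Real.log ((q10+q11)/(q00+q01+q10+q11)))
        + (-((q00+q10) * Real.log ((q00+q10)/(q00+q01+q10+q11)))
          - (q01+q11) * Real.log ((q01+q11)/(q00+q01+q10+q11)))) / Real.log 2 := by
        exact div_le_div_of_nonneg_right hnat h2.le
    _ = _ := by simp only [Real.logb]; ring

lemma hb_eq_binEntropy (q : ℝ) : hb q = Real.binEntropy q / Real.log 2 := by
  simp [hb, Real.binEntropy, Real.log_inv, Real.logb]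
  ring

lemma hb_eq_smul : hb = (Real.log 2)⁻¹ • Real.binEntropy := by
  funext q
  rw [hb_eq_binEntropy]
  simp [div_eq_inv_mul]

lemma hb_concave : ConcaveOn ℝ (Set.Icc (0:ℝ) 1) hb := by
  rw [hb_eq_smul]
  exact Real.strictConcave_binEntropy.concaveOn.smul (by positivity)

lemma hb_mono {x y : ℝ} (hx : 0 ≤ x) (hxy : x ≤ y) (hy : y ≤ 1/2) : hb x ≤ hb y := by
  rw [hb_eq_binEntropy, hb_eq_binEntropy]
  gcongr
  refine Real.binEntropy_strictMonoOn.monotoneOn ⟨hx, by norm_num; linarith⟩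
    ⟨by linarith, by norm_num; linarith⟩ hxy

lemma hb_jensen {ι : Type*} [Fintype ι] (w z : ι → ℝ) (hw : ∀ i, 0 ≤ w i)
    (hw1 : ∑ i, w i = 1) (hz : ∀ i, z i ∈ Set.Icc (0:ℝ) 1) :
    ∑ i, w i * hb (z i) ≤ hb (∑ i, w i * z i) := by
  have := hb_concave.le_map_sum (t := Finset.univ) (w := w) (p := z)
    (fun i _ => hw i) hw1 (fun i _ => hz i)
  simpa [smul_eq_mul] using this

lemma F_eq (r m : ℝ) (hr : 0 ≤ r) (hrm : r ≤ m) :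
    -(r * Real.logb 2 (r/m)) - ((m - r) * Real.logb 2 ((m-r)/m)) = m * hb (r/m) := by
  rcases eq_or_lt_of_le (le_trans hr hrm) with hm0 | hm0
  · have : r = 0 := le_antisymm (hm0 ▸ hrm) hr
    simp [this, ← hm0, hb]
  · have h1 : 1 - r/m = (m-r)/m := by field_simp
    rw [hb, h1]
    field_simp

lemma split_term (p pac pbc pc : ℝ) (hp : 0 ≤ p) (h1 : p ≤ pac) (h2 : p ≤ pbc)
    (h3 : pac ≤ pc) :
    p * Real.logb 2 (p * pc / (pac * pbc))
      = p * Real.logb 2 (p / pbc) - p * Real.logb 2 (pac / pc) := by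
  rcases eq_or_lt_of_le hp with h0 | h0
  · simp [← h0]
  · have hpac : 0 < pac := lt_of_lt_of_le h0 h1
    have hpbc : 0 < pbc := lt_of_lt_of_le h0 h2
    have hpc : 0 < pc := lt_of_lt_of_le hpac h3
    rw [show p * pc / (pac * pbc) = (p/pbc) / (pac/pc) by field_simp,
      Real.logb_div (by positivity) (by positivity), mul_sub]

/-- subadditivity + row/col identification -/
lemma claim2x2 (q00 q01 q10 q11 r1 r2 : ℝ)
    (h00 : 0 ≤ q00) (h01 : 0 ≤ q01) (h10 : 0 ≤ q10) (h11 : 0 ≤ q11)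
    (hr1 : r1 = q00 + q01 ∨ r1 = q10 + q11) (hr2 : r2 = q00 + q10 ∨ r2 = q01 + q11) :
    -(q00 * Real.logb 2 (q00 / (q00+q01+q10+q11)))
      - q01 * Real.logb 2 (q01 / (q00+q01+q10+q11))
      - q10 * Real.logb 2 (q10 / (q00+q01+q10+q11))
      - q11 * Real.logb 2 (q11 / (q00+q01+q10+q11))
    ≤ (q00+q01+q10+q11) * hb (r1 / (q00+q01+q10+q11))
      + (q00+q01+q10+q11) * hb (r2 / (q00+q01+q10+q11)) := by
  have hg := gibbs2x2 q00 q01 q10 q11 h00 h01 h10 h11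
  have hrow : (-((q00+q01) * Real.logb 2 ((q00+q01)/(q00+q01+q10+q11)))
        - (q10+q11) * Real.logb 2 ((q10+q11)/(q00+q01+q10+q11)))
      = (q00+q01+q10+q11) * hb (r1 / (q00+q01+q10+q11)) := by
    rcases hr1 with h | h <;> subst h
    · have := F_eq (q00+q01) (q00+q01+q10+q11) (by linarith) (by linarith)
      rw [show q00+q01+q10+q11 - (q00+q01) = q10+q11 by ring] at this
      linarith [this]
    · have := F_eq (q10+q11) (q00+q01+q10+q11) (by linarith) (by linarith)
      rw [show q00+q01+q10+q11 - (q10+q11) = q00+q01 by ring] at this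
      linarith [this]
  have hcol : (-((q00+q10) * Real.logb 2 ((q00+q10)/(q00+q01+q10+q11)))
        - (q01+q11) * Real.logb 2 ((q01+q11)/(q00+q01+q10+q11)))
      = (q00+q01+q10+q11) * hb (r2 / (q00+q01+q10+q11)) := by
    rcases hr2 with h | h <;> subst h
    · have := F_eq (q00+q10) (q00+q01+q10+q11) (by linarith) (by linarith)
      rw [show q00+q01+q10+q11 - (q00+q10) = q01+q11 by ring] at this
      linarith [this]
    · have := F_eq (q01+q11) (q00+q01+q10+q11) (by linarith) (by linarith)
      rw [show q00+q01+q10+q11 - (q01+q11) = q00+q10 by ring] at this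
      linarith [this]
  linarith [hg, hrow.le, hrow.ge, hcol.le, hcol.ge]

end Aux

/-- Joint pmf of `(fA, fB, fC)` induced by a pmf `μ` on a finite sample space. -/
noncomputable def jointP {Ω α β γ : Type*} [Fintype Ω]
    [DecidableEq α] [DecidableEq β] [DecidableEq γ]
    (μ : Ω → ℝ) (fA : Ω → α) (fB : Ω → β) (fC : Ω → γ) (a : α) (b : β) (c : γ) : ℝ :=
  ∑ ω, if fA ω = a ∧ fB ω = b ∧ fC ω = c then μ ω else 0

/-- Conditional mutual information `I(A; B | C)` (base-2) of finite random variables. -/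
noncomputable def cmi {Ω α β γ : Type*} [Fintype Ω] [Fintype α] [Fintype β] [Fintype γ]
    [DecidableEq α] [DecidableEq β] [DecidableEq γ]
    (μ : Ω → ℝ) (fA : Ω → α) (fB : Ω → β) (fC : Ω → γ) : ℝ :=
  ∑ a, ∑ b, ∑ c,
    jointP μ fA fB fC a b c *
      Real.logb 2 (jointP μ fA fB fC a b c * (∑ a', ∑ b', jointP μ fA fB fC a' b' c) /
        ((∑ b', jointP μ fA fB fC a b' c) * (∑ a', jointP μ fA fB fC a' b c)))

/-- Probability of a pair of values. -/
noncomputable def pr2 {Ω : Type*} [Fintype Ω] (μ : Ω → ℝ)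
    (f g : Ω → Fin 2) (a b : Fin 2) : ℝ :=
  ∑ ω, if f ω = a ∧ g ω = b then μ ω else 0

/-- Probability of a triple of values. -/
noncomputable def pr3 {Ω : Type*} [Fintype Ω] (μ : Ω → ℝ)
    (f g h : Ω → Fin 2) (a b c : Fin 2) : ℝ :=
  ∑ ω, if f ω = a ∧ g ω = b ∧ h ω = c then μ ω else 0

/-- Probability of a single value. -/
noncomputable def pr1 {Ω : Type*} [Fintype Ω] (μ : Ω → ℝ) (f : Ω → Fin 2) (a : Fin 2) : ℝ :=
  ∑ ω, if f ω = a then μ ω else 0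

/-- with `(X1, X2) ~ DSBS(p1)`, `(X1, Y) ~ DSBS(p2)`, `Y − X1 − X2`
Markov, `P(X1 ≠ X̂1) ≤ D1`, `P(X2 ≠ X̂2) ≤ D2`, `D1, D2 ∈ [0, 1/2]`, we have
`I(X1, X2; X̂1, X̂2, Ŝ | Y) ≥ h_b(p1) + h_b(p2) − h_b(D1) − h_b(D2)`. -/
theorem correlated_binary_converse
    {Ω : Type*} [Fintype Ω]
    (μ : Ω → ℝ) (hμ0 : ∀ ω, 0 ≤ μ ω) (hμ1 : ∑ ω, μ ω = 1)
    (X1 X2 Y X1h X2h Sh' : Ω → Fin 2)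
    (p1 p2 D1 D2 : ℝ)
    (hp1 : 0 ≤ p1) (hp1' : p1 ≤ 1/2) (hp2 : 0 ≤ p2) (hp2' : p2 ≤ 1/2)
    (hD1 : 0 ≤ D1) (hD1' : D1 ≤ 1/2) (hD2 : 0 ≤ D2) (hD2' : D2 ≤ 1/2)
    (hX1X2 : ∀ a b, pr2 μ X1 X2 a b = if a = b then (1 - p1)/2 else p1/2)
    (hX1Y : ∀ a c, pr2 μ X1 Y a c = if a = c then (1 - p2)/2 else p2/2)
    -- Markov chain Y − X1 − X2 : p(x1,x2,y) · p(x1) = p(x1,x2) · p(x1,y)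
    (hmarkov : ∀ a b c,
      pr3 μ X1 X2 Y a b c * pr1 μ X1 a = pr2 μ X1 X2 a b * pr2 μ X1 Y a c)
    (hd1 : (∑ ω, if X1 ω ≠ X1h ω then μ ω else 0) ≤ D1)
    (hd2 : (∑ ω, if X2 ω ≠ X2h ω then μ ω else 0) ≤ D2) :
    cmi μ (fun ω => (X1 ω, X2 ω)) (fun ω => (X1h ω, X2h ω, Sh' ω)) Y ≥
      hb p1 + hb p2 - hb D1 - hb D2 := by
  classical
  set A : Ω → Fin 2 × Fin 2 := fun ω => (X1 ω, X2 ω) with hA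
  set B : Ω → Fin 2 × Fin 2 × Fin 2 := fun ω => (X1h ω, X2h ω, Sh' ω) with hB
  set P : (Fin 2 × Fin 2) → (Fin 2 × Fin 2 × Fin 2) → Fin 2 → ℝ := jointP μ A B Y with hP
  have hP0 : ∀ a b c, 0 ≤ P a b c := by
    intro a b c
    refine Finset.sum_nonneg fun ω _ => ?_
    split_ifs
    · exact hμ0 ω
    · exact le_refl 0
  -- marginal over b
  have hM1 : ∀ (a : Fin 2 × Fin 2) (c : Fin 2),
      (∑ b, P a b c) = pr3 μ X1 X2 Y a.1 a.2 c := by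
    intro a c
    rw [hP]
    show (∑ b, ∑ ω, if A ω = a ∧ B ω = b ∧ Y ω = c then μ ω else 0) = _
    rw [Finset.sum_comm, pr3]
    refine Finset.sum_congr rfl fun ω _ => ?_
    by_cases h1 : X1 ω = a.1 <;> by_cases h2 : X2 ω = a.2 <;> by_cases h3 : Y ω = c <;>
      simp [ite_and, h1, h2, h3, hA, hB, Prod.ext_iff, Fintype.sum_prod_type,
        Finset.sum_ite_eq]
  have hpr1 : ∀ a, pr1 μ X1 a = 1/2 := by
    intro a
    have h : pr1 μ X1 a = pr2 μ X1 X2 a 0 + pr2 μ X1 X2 a 1 := by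
      rw [pr1, pr2, pr2, ← Finset.sum_add_distrib]
      refine Finset.sum_congr rfl fun ω _ => ?_
      have h2 : X2 ω = 0 ∨ X2 ω = 1 := by omega
      by_cases h1 : X1 ω = a <;> rcases h2 with h2 | h2 <;> simp [h1, h2]
    rw [h, hX1X2, hX1X2]
    have ha : a = 0 ∨ a = 1 := by omega
    rcases ha with ha | ha <;> subst ha <;> norm_num <;> ring
  have hpr3v : ∀ a b c, pr3 μ X1 X2 Y a b c
      = (if a = b then 1 - p1 else p1) * (if a = c then 1 - p2 else p2) / 2 := by
    intro a b c
    have h := hmarkov a b c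
    rw [hpr1, hX1X2, hX1Y] at h
    have h2 : pr3 μ X1 X2 Y a b c
        = 2 * ((if a = b then (1-p1)/2 else p1/2) * (if a = c then (1-p2)/2 else p2/2)) := by
      split_ifs at h ⊢ <;> linarith
    rw [h2]; split_ifs <;> ring
  have hC : ∀ c, (∑ a : Fin 2 × Fin 2, ∑ b, P a b c) = 1/2 := by
    intro c
    simp only [hM1, hpr3v]
    have hc : c = 0 ∨ c = 1 := by omega
    rcases hc with hc | hc <;> subst hc <;>
      simp [Fintype.sum_prod_type, Fin.sum_univ_two] <;> ring
  have e1 : ∀ (a : Fin 2 × Fin 2) (b : Fin 2 × Fin 2 × Fin 2) (c : Fin 2),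
      jointP μ A B Y a b c *
        Real.logb 2 (jointP μ A B Y a b c * (∑ a', ∑ b', jointP μ A B Y a' b' c) /
          ((∑ b', jointP μ A B Y a b' c) * (∑ a', jointP μ A B Y a' b c)))
      = P a b c * Real.logb 2 (P a b c / (∑ a', P a' b c))
        - P a b c * Real.logb 2 ((∑ b', P a b' c) / (∑ a', ∑ b', P a' b' c)) := by
    intro a b c
    exact split_term (P a b c) (∑ b', P a b' c) (∑ a', P a' b c) (∑ a', ∑ b', P a' b' c)
      (hP0 a b c)
      (Finset.single_le_sum (fun b' _ => hP0 a b' c) (Finset.mem_univ b))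
      (Finset.single_le_sum (fun a' _ => hP0 a' b c) (Finset.mem_univ a))
      (Finset.single_le_sum (f := fun a' => ∑ b', P a' b' c)
        (fun a' _ => Finset.sum_nonneg fun b' _ => hP0 a' b' c) (Finset.mem_univ a))
  have hsplit : cmi μ A B Y
      = (∑ b, ∑ c, ∑ a, P a b c * Real.logb 2 (P a b c / (∑ a', P a' b c)))
        - (∑ a : Fin 2 × Fin 2, ∑ c, (∑ b, P a b c) *
            Real.logb 2 ((∑ b, P a b c) / (∑ a', ∑ b', P a' b' c))) := by
    rw [cmi]
    simp only [e1]
    simp only [Finset.sum_sub_distrib]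
    congr 1
    · rw [Finset.sum_comm]
      exact Finset.sum_congr rfl fun b _ => Finset.sum_comm
    · refine Finset.sum_congr rfl fun a _ => ?_
      rw [Finset.sum_comm]
      refine Finset.sum_congr rfl fun c _ => ?_
      rw [← Finset.sum_mul]
  have hT1 : (∑ a : Fin 2 × Fin 2, ∑ c, (∑ b, P a b c) *
      Real.logb 2 ((∑ b, P a b c) / (∑ a', ∑ b', P a' b' c))) = -(hb p1 + hb p2) := by
    have e : ∀ (a : Fin 2 × Fin 2) (c : Fin 2),
        (∑ b, P a b c) * Real.logb 2 ((∑ b, P a b c) / (∑ a', ∑ b', P a' b' c))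
        = ((if a.1 = a.2 then 1-p1 else p1) * (if a.1 = c then 1-p2 else p2)) *
            Real.logb 2 ((if a.1 = a.2 then 1-p1 else p1) * (if a.1 = c then 1-p2 else p2))
          / 2 := by
      intro a c
      rw [hM1, hC, hpr3v]
      generalize (if a.1 = a.2 then 1-p1 else p1) = u
      generalize (if a.1 = c then 1-p2 else p2) = v
      rw [show u * v / 2 / (1/2 : ℝ) = u * v by ring]
      ring
    simp only [e]
    have k1 := mul_logb_mul (1-p1) (1-p2)
    have k2 := mul_logb_mul (1-p1) p2
    have k3 := mul_logb_mul p1 (1-p2)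
    have k4 := mul_logb_mul p1 p2
    simp only [Fintype.sum_prod_type, Fin.sum_univ_two, hb]
    norm_num
    linear_combination k1 + k2 + k3 + k4
  set m : (Fin 2 × Fin 2 × Fin 2) → Fin 2 → ℝ := fun b c => ∑ a, P a b c with hm
  set r1 : (Fin 2 × Fin 2 × Fin 2) → Fin 2 → ℝ :=
    fun b c => ∑ a, if a.1 = b.1 then 0 else P a b c with hr1
  set r2 : (Fin 2 × Fin 2 × Fin 2) → Fin 2 → ℝ :=
    fun b c => ∑ a, if a.2 = b.2.1 then 0 else P a b c with hr2
  have hmbc : ∀ b c, (∑ a, P a b c) = m b c := fun b c => rfl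
  have hm0 : ∀ b c, 0 ≤ m b c := fun b c => Finset.sum_nonneg fun a _ => hP0 a b c
  have hr10 : ∀ b c, 0 ≤ r1 b c := by
    intro b c
    refine Finset.sum_nonneg fun a _ => ?_
    split_ifs
    · exact le_refl 0
    · exact hP0 a b c
  have hr20 : ∀ b c, 0 ≤ r2 b c := by
    intro b c
    refine Finset.sum_nonneg fun a _ => ?_
    split_ifs
    · exact le_refl 0
    · exact hP0 a b c
  have hr1m : ∀ b c, r1 b c ≤ m b c := by
    intro b c
    refine Finset.sum_le_sum fun a _ => ?_
    split_ifs
    · exact hP0 a b c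
    · exact le_refl _
  have hr2m : ∀ b c, r2 b c ≤ m b c := by
    intro b c
    refine Finset.sum_le_sum fun a _ => ?_
    split_ifs
    · exact hP0 a b c
    · exact le_refl _
  have claim1 : ∀ b c, -(∑ a, P a b c * Real.logb 2 (P a b c / m b c))
      ≤ m b c * hb (r1 b c / m b c) + m b c * hb (r2 b c / m b c) := by
    intro b c
    have hsum : m b c = P (0,0) b c + P (0,1) b c + P (1,0) b c + P (1,1) b c := by
      show (∑ a, P a b c) = _
      simp [Fintype.sum_prod_type, Fin.sum_univ_two]
      ring
    have hexp : (∑ a, P a b c * Real.logb 2 (P a b c / m b c))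
        = P (0,0) b c * Real.logb 2 (P (0,0) b c / m b c)
          + P (0,1) b c * Real.logb 2 (P (0,1) b c / m b c)
          + P (1,0) b c * Real.logb 2 (P (1,0) b c / m b c)
          + P (1,1) b c * Real.logb 2 (P (1,1) b c / m b c) := by
      simp [Fintype.sum_prod_type, Fin.sum_univ_two]
      ring
    have hr1v : r1 b c = P (0,0) b c + P (0,1) b c ∨ r1 b c = P (1,0) b c + P (1,1) b c := by
      have hb1 : b.1 = 0 ∨ b.1 = 1 := by omega
      rcases hb1 with h | h
      · right
        show (∑ a : Fin 2 × Fin 2, if a.1 = b.1 then 0 else P a b c) = _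
        simp [Fintype.sum_prod_type, Fin.sum_univ_two, h]
      · left
        show (∑ a : Fin 2 × Fin 2, if a.1 = b.1 then 0 else P a b c) = _
        simp [Fintype.sum_prod_type, Fin.sum_univ_two, h]
    have hr2v : r2 b c = P (0,0) b c + P (1,0) b c ∨ r2 b c = P (0,1) b c + P (1,1) b c := by
      have hb2 : b.2.1 = 0 ∨ b.2.1 = 1 := by omega
      rcases hb2 with h | h
      · right
        show (∑ a : Fin 2 × Fin 2, if a.2 = b.2.1 then 0 else P a b c) = _
        simp [Fintype.sum_prod_type, Fin.sum_univ_two, h]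
      · left
        show (∑ a : Fin 2 × Fin 2, if a.2 = b.2.1 then 0 else P a b c) = _
        simp [Fintype.sum_prod_type, Fin.sum_univ_two, h]
    have hc := claim2x2 (P (0,0) b c) (P (0,1) b c) (P (1,0) b c) (P (1,1) b c)
      (r1 b c) (r2 b c) (hP0 _ b c) (hP0 _ b c) (hP0 _ b c) (hP0 _ b c) hr1v hr2v
    rw [hexp, hsum]
    linarith [hc]
  -- total mass
  have mstep1 : ∀ b c, m b c = ∑ ω, if B ω = b ∧ Y ω = c then μ ω else 0 := by
    intro b c
    show (∑ a, ∑ ω, if A ω = a ∧ B ω = b ∧ Y ω = c then μ ω else 0) = _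
    rw [Finset.sum_comm]
    refine Finset.sum_congr rfl fun ω _ => ?_
    by_cases h1 : B ω = b <;> by_cases h2 : Y ω = c <;>
      simp [ite_and, h1, h2, Finset.sum_ite_eq]
  have htot : (∑ b, ∑ c, m b c) = 1 := by
    simp only [mstep1]
    rw [← hμ1]
    have mstep2 : ∀ b : Fin 2 × Fin 2 × Fin 2,
        (∑ c, ∑ ω, if B ω = b ∧ Y ω = c then μ ω else 0)
          = ∑ ω, if B ω = b then μ ω else 0 := by
      intro b
      rw [Finset.sum_comm]
      refine Finset.sum_congr rfl fun ω _ => ?_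
      by_cases h1 : B ω = b <;> simp [ite_and, h1, Finset.sum_ite_eq]
    simp only [mstep2]
    rw [Finset.sum_comm]
    refine Finset.sum_congr rfl fun ω _ => ?_
    simp [Finset.sum_ite_eq]
  -- error mass identities
  have estep1 : ∀ b c, r1 b c
      = ∑ ω, if ¬(X1 ω = b.1) ∧ B ω = b ∧ Y ω = c then μ ω else 0 := by
    intro b c
    show (∑ a : Fin 2 × Fin 2, if a.1 = b.1 then 0 else P a b c) = _
    have expand : ∀ a : Fin 2 × Fin 2, (if a.1 = b.1 then 0 else P a b c)
        = ∑ ω, if a.1 = b.1 then 0 else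
            (if A ω = a ∧ B ω = b ∧ Y ω = c then μ ω else 0) := by
      intro a
      split_ifs with h
      · simp
      · rfl
    simp only [expand]
    rw [Finset.sum_comm]
    refine Finset.sum_congr rfl fun ω _ => ?_
    have key : ∀ a : Fin 2 × Fin 2, (if a.1 = b.1 then 0 else
        (if A ω = a ∧ B ω = b ∧ Y ω = c then μ ω else 0))
        = if A ω = a then (if ¬(X1 ω = b.1) ∧ B ω = b ∧ Y ω = c then μ ω else 0) else 0 := by
      intro a
      by_cases h : A ω = a
      · rw [← h]
        simp only [hA]
        split_ifs <;> tauto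
      · simp [h]
    simp only [key, Finset.sum_ite_eq, Finset.mem_univ, if_true]
  have estep2 : ∀ b c, r2 b c
      = ∑ ω, if ¬(X2 ω = b.2.1) ∧ B ω = b ∧ Y ω = c then μ ω else 0 := by
    intro b c
    show (∑ a : Fin 2 × Fin 2, if a.2 = b.2.1 then 0 else P a b c) = _
    have expand : ∀ a : Fin 2 × Fin 2, (if a.2 = b.2.1 then 0 else P a b c)
        = ∑ ω, if a.2 = b.2.1 then 0 else
            (if A ω = a ∧ B ω = b ∧ Y ω = c then μ ω else 0) := by
      intro a
      split_ifs with h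
      · simp
      · rfl
    simp only [expand]
    rw [Finset.sum_comm]
    refine Finset.sum_congr rfl fun ω _ => ?_
    have key : ∀ a : Fin 2 × Fin 2, (if a.2 = b.2.1 then 0 else
        (if A ω = a ∧ B ω = b ∧ Y ω = c then μ ω else 0))
        = if A ω = a then (if ¬(X2 ω = b.2.1) ∧ B ω = b ∧ Y ω = c then μ ω else 0) else 0 := by
      intro a
      by_cases h : A ω = a
      · rw [← h]
        simp only [hA]
        split_ifs <;> tauto
      · simp [h]
    simp only [key, Finset.sum_ite_eq, Finset.mem_univ, if_true]
  have he1 : (∑ b, ∑ c, r1 b c) = ∑ ω, if X1 ω ≠ X1h ω then μ ω else 0 := by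
    simp only [estep1]
    have s2 : ∀ b : Fin 2 × Fin 2 × Fin 2,
        (∑ c, ∑ ω, if ¬(X1 ω = b.1) ∧ B ω = b ∧ Y ω = c then μ ω else 0)
        = ∑ ω, if ¬(X1 ω = b.1) ∧ B ω = b then μ ω else 0 := by
      intro b
      rw [Finset.sum_comm]
      refine Finset.sum_congr rfl fun ω _ => ?_
      by_cases h1 : X1 ω = b.1 <;> by_cases h2 : B ω = b <;>
        simp [ite_and, h1, h2, Finset.sum_ite_eq]
    simp only [s2]
    rw [Finset.sum_comm]
    refine Finset.sum_congr rfl fun ω _ => ?_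
    have key : ∀ b : Fin 2 × Fin 2 × Fin 2, (if ¬(X1 ω = b.1) ∧ B ω = b then μ ω else 0)
        = if B ω = b then (if ¬(X1 ω = b.1) then μ ω else 0) else 0 := by
      intro b
      by_cases h1 : B ω = b <;> by_cases h2 : X1 ω = b.1 <;> simp [h1, h2]
    simp only [key, Finset.sum_ite_eq, Finset.mem_univ, if_true]
    rfl
  have he2 : (∑ b, ∑ c, r2 b c) = ∑ ω, if X2 ω ≠ X2h ω then μ ω else 0 := by
    simp only [estep2]
    have s2 : ∀ b : Fin 2 × Fin 2 × Fin 2,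
        (∑ c, ∑ ω, if ¬(X2 ω = b.2.1) ∧ B ω = b ∧ Y ω = c then μ ω else 0)
        = ∑ ω, if ¬(X2 ω = b.2.1) ∧ B ω = b then μ ω else 0 := by
      intro b
      rw [Finset.sum_comm]
      refine Finset.sum_congr rfl fun ω _ => ?_
      by_cases h1 : X2 ω = b.2.1 <;> by_cases h2 : B ω = b <;>
        simp [ite_and, h1, h2, Finset.sum_ite_eq]
    simp only [s2]
    rw [Finset.sum_comm]
    refine Finset.sum_congr rfl fun ω _ => ?_
    have key : ∀ b : Fin 2 × Fin 2 × Fin 2, (if ¬(X2 ω = b.2.1) ∧ B ω = b then μ ω else 0)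
        = if B ω = b then (if ¬(X2 ω = b.2.1) then μ ω else 0) else 0 := by
      intro b
      by_cases h1 : B ω = b <;> by_cases h2 : X2 ω = b.2.1 <;> simp [h1, h2]
    simp only [key, Finset.sum_ite_eq, Finset.mem_univ, if_true]
    rfl
  -- Jensen for r1
  have hz1 : ∀ b c, r1 b c / m b c ∈ Set.Icc (0:ℝ) 1 := by
    intro b c
    rcases eq_or_lt_of_le (hm0 b c) with h | h
    · have hz : r1 b c = 0 := le_antisymm (h ▸ hr1m b c) (hr10 b c)
      rw [hz, zero_div]
      exact ⟨le_refl 0, by norm_num⟩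
    · exact ⟨div_nonneg (hr10 b c) (hm0 b c), (div_le_one h).2 (hr1m b c)⟩
  have hz2 : ∀ b c, r2 b c / m b c ∈ Set.Icc (0:ℝ) 1 := by
    intro b c
    rcases eq_or_lt_of_le (hm0 b c) with h | h
    · have hz : r2 b c = 0 := le_antisymm (h ▸ hr2m b c) (hr20 b c)
      rw [hz, zero_div]
      exact ⟨le_refl 0, by norm_num⟩
    · exact ⟨div_nonneg (hr20 b c) (hm0 b c), (div_le_one h).2 (hr2m b c)⟩
  have hcancel1 : ∀ b c, m b c * (r1 b c / m b c) = r1 b c := by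
    intro b c
    rcases eq_or_lt_of_le (hm0 b c) with h | h
    · have hz : r1 b c = 0 := le_antisymm (h ▸ hr1m b c) (hr10 b c)
      rw [hz, ← h]
      simp
    · field_simp
  have hcancel2 : ∀ b c, m b c * (r2 b c / m b c) = r2 b c := by
    intro b c
    rcases eq_or_lt_of_le (hm0 b c) with h | h
    · have hz : r2 b c = 0 := le_antisymm (h ▸ hr2m b c) (hr20 b c)
      rw [hz, ← h]
      simp
    · field_simp
  have e1nonneg : (0:ℝ) ≤ ∑ ω, if X1 ω ≠ X1h ω then μ ω else 0 := by
    refine Finset.sum_nonneg fun ω _ => ?_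
    split_ifs
    · exact hμ0 ω
    · exact le_refl 0
  have e2nonneg : (0:ℝ) ≤ ∑ ω, if X2 ω ≠ X2h ω then μ ω else 0 := by
    refine Finset.sum_nonneg fun ω _ => ?_
    split_ifs
    · exact hμ0 ω
    · exact le_refl 0
  have hjen1 : (∑ b, ∑ c, m b c * hb (r1 b c / m b c)) ≤ hb D1 := by
    have hj := hb_jensen (ι := (Fin 2 × Fin 2 × Fin 2) × Fin 2)
      (fun x => m x.1 x.2) (fun x => r1 x.1 x.2 / m x.1 x.2)
      (fun x => hm0 x.1 x.2)
      (by rw [Fintype.sum_prod_type]; exact htot)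
      (fun x => hz1 x.1 x.2)
    rw [show (∑ x : (Fin 2 × Fin 2 × Fin 2) × Fin 2,
        m x.1 x.2 * (r1 x.1 x.2 / m x.1 x.2)) = ∑ b, ∑ c, r1 b c by
      rw [Fintype.sum_prod_type]
      exact Finset.sum_congr rfl fun b _ => Finset.sum_congr rfl fun c _ => hcancel1 b c] at hj
    rw [he1] at hj
    calc (∑ b, ∑ c, m b c * hb (r1 b c / m b c))
        = ∑ x : (Fin 2 × Fin 2 × Fin 2) × Fin 2, m x.1 x.2 * hb (r1 x.1 x.2 / m x.1 x.2) :=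
          (Fintype.sum_prod_type' (f := fun b c => m b c * hb (r1 b c / m b c))).symm
      _ ≤ hb (∑ ω, if X1 ω ≠ X1h ω then μ ω else 0) := hj
      _ ≤ hb D1 := hb_mono e1nonneg hd1 hD1'
  have hjen2 : (∑ b, ∑ c, m b c * hb (r2 b c / m b c)) ≤ hb D2 := by
    have hj := hb_jensen (ι := (Fin 2 × Fin 2 × Fin 2) × Fin 2)
      (fun x => m x.1 x.2) (fun x => r2 x.1 x.2 / m x.1 x.2)
      (fun x => hm0 x.1 x.2)
      (by rw [Fintype.sum_prod_type]; exact htot)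
      (fun x => hz2 x.1 x.2)
    rw [show (∑ x : (Fin 2 × Fin 2 × Fin 2) × Fin 2,
        m x.1 x.2 * (r2 x.1 x.2 / m x.1 x.2)) = ∑ b, ∑ c, r2 b c by
      rw [Fintype.sum_prod_type]
      exact Finset.sum_congr rfl fun b _ => Finset.sum_congr rfl fun c _ => hcancel2 b c] at hj
    rw [he2] at hj
    calc (∑ b, ∑ c, m b c * hb (r2 b c / m b c))
        = ∑ x : (Fin 2 × Fin 2 × Fin 2) × Fin 2, m x.1 x.2 * hb (r2 x.1 x.2 / m x.1 x.2) :=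
          (Fintype.sum_prod_type' (f := fun b c => m b c * hb (r2 b c / m b c))).symm
      _ ≤ hb (∑ ω, if X2 ω ≠ X2h ω then μ ω else 0) := hj
      _ ≤ hb D2 := hb_mono e2nonneg hd2 hD2'
  -- conclude
  have hT2 : (∑ b, ∑ c, ∑ a, P a b c * Real.logb 2 (P a b c / (∑ a', P a' b c)))
      ≥ -(hb D1 + hb D2) := by
    have hrw : (∑ b, ∑ c, ∑ a, P a b c * Real.logb 2 (P a b c / (∑ a', P a' b c)))
        = ∑ b, ∑ c, ∑ a, P a b c * Real.logb 2 (P a b c / m b c) := by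
      simp only [hmbc]
    rw [hrw]
    have step : (∑ b, ∑ c, -(m b c * hb (r1 b c / m b c) + m b c * hb (r2 b c / m b c)))
        ≤ ∑ b, ∑ c, ∑ a, P a b c * Real.logb 2 (P a b c / m b c) := by
      refine Finset.sum_le_sum fun b _ => Finset.sum_le_sum fun c _ => ?_
      linarith [claim1 b c]
    have hdist : (∑ b, ∑ c, -(m b c * hb (r1 b c / m b c) + m b c * hb (r2 b c / m b c)))
        = -((∑ b, ∑ c, m b c * hb (r1 b c / m b c))
            + (∑ b, ∑ c, m b c * hb (r2 b c / m b c))) := by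
      simp [Finset.sum_add_distrib]
    rw [hdist] at step
    linarith [step, hjen1, hjen2]
  rw [ge_iff_le, hsplit, hT1]
  linarith [hT2]
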